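/- For a ≥ b and each j with 1 ≤ j ≤ b, the map E : E†^j H^S_{a+j,b−j} → E†^{j−1} H^S_{a+j,b−j} is a linear isomorphism, with inverse (1/(j(a−b+j+1)))·E†. -/

import Mathlib

/-! `E`, `E†` and `[E, E†]` form an `sl₂`-triple: `[E, E†]` acts on bidegree `(α, β)` by `α − β`
(Euler's identity) and `E†` shifts the bidegree by `(−1, +1)`. For `h ∈ Ker E` of bidegree
`(α, β)` the usual `sl₂` computation gives `E E†^{i+1} h = (i+1)(α − β − i) E†^i h`; for
`h ∈ H^S_{a+j,b−j}` and `i = j − 1` the factor is `c = j(a − b + j + 1) ≠ 0`, and the rest is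
linear algebra. -/

open MvPolynomial

noncomputable section

/-- Index type for the variables `z_1,…,z_{2p}, z̄_1,…,z̄_{2p}` on `ℝ^{4p}`:
the pair `(k, i) : Fin p × Fin 2` encodes the variable with index `2k+1` (for `i = 0`)
or `2k+2` (for `i = 1`); `Sum.inl` gives a `z`-variable, `Sum.inr` a `z̄`-variable. -/
abbrev QIdx (p : ℕ) := (Fin p × Fin 2) ⊕ (Fin p × Fin 2)

/-- Complex polynomials in the `4p` commuting variables `z_j, z̄_j`, `j = 1,…,2p`. -/
abbrev QPoly (p : ℕ) := MvPolynomial (QIdx p) ℂ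

/-- The variable `z_j`. -/
def qz (p : ℕ) (j : Fin p × Fin 2) : QPoly p := X (Sum.inl j)

/-- The variable `z̄_j`. -/
def qzb (p : ℕ) (j : Fin p × Fin 2) : QPoly p := X (Sum.inr j)

/-- Multiplication by `z_j`. -/
def qmz (p : ℕ) (j : Fin p × Fin 2) : Module.End ℂ (QPoly p) := LinearMap.mulLeft ℂ (qz p j)

/-- Multiplication by `z̄_j`. -/
def qmzb (p : ℕ) (j : Fin p × Fin 2) : Module.End ℂ (QPoly p) := LinearMap.mulLeft ℂ (qzb p j)

/-- `∂_{z_j}`. -/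
def qdz (p : ℕ) (j : Fin p × Fin 2) : Module.End ℂ (QPoly p) := (pderiv (Sum.inl j)).toLinearMap

/-- `∂_{z̄_j}`. -/
def qdzb (p : ℕ) (j : Fin p × Fin 2) : Module.End ℂ (QPoly p) := (pderiv (Sum.inr j)).toLinearMap

/-- The Laplace operator `Δ_{4p} = 4 Σ_{j=1}^{2p} ∂_{z_j} ∂_{z̄_j}`. -/
def qlap (p : ℕ) : Module.End ℂ (QPoly p) := (4 : ℂ) • ∑ j : Fin p × Fin 2, qdz p j * qdzb p j

/-- `r² = Σ_{j=1}^{2p} z_j z̄_j`. -/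
def qr2 (p : ℕ) : QPoly p := ∑ j : Fin p × Fin 2, qz p j * qzb p j

/-- The symplectic ladder operator `E = Σ_{k=1}^p (z_{2k-1} ∂_{z̄_{2k}} − z_{2k} ∂_{z̄_{2k-1}})`. -/
def opE (p : ℕ) : Module.End ℂ (QPoly p) :=
  ∑ k : Fin p, (qmz p (k, 0) * qdzb p (k, 1) - qmz p (k, 1) * qdzb p (k, 0))

/-- The symplectic ladder operator
`E† = −Σ_{k=1}^p (z̄_{2k-1} ∂_{z_{2k}} − z̄_{2k} ∂_{z_{2k-1}})`. -/
def opEd (p : ℕ) : Module.End ℂ (QPoly p) :=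
  - ∑ k : Fin p, (qmzb p (k, 0) * qdz p (k, 1) - qmzb p (k, 1) * qdz p (k, 0))

/-- Weight recording the degree in the `z`-variables. -/
def qwz (p : ℕ) : QIdx p → ℕ := Sum.elim (fun _ => 1) (fun _ => 0)

/-- Weight recording the degree in the `z̄`-variables. -/
def qwzb (p : ℕ) : QIdx p → ℕ := Sum.elim (fun _ => 0) (fun _ => 1)

/-- `P_{a,b}`: polynomials of bidegree `(a,b)`, i.e. `a`-homogeneous in the `z_j` and
`b`-homogeneous in the `z̄_j`. -/
def qPab (p a b : ℕ) : Submodule ℂ (QPoly p) :=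
  weightedHomogeneousSubmodule ℂ (qwz p) a ⊓ weightedHomogeneousSubmodule ℂ (qwzb p) b

/-- `H_{a,b}`: harmonic polynomials of bidegree `(a,b)`. -/
def qHab (p a b : ℕ) : Submodule ℂ (QPoly p) := qPab p a b ⊓ LinearMap.ker (qlap p)

/-- `H^S_{a,b} = H_{a,b} ∩ Ker E`: symplectic harmonics of bidegree `(a,b)`. -/
def qHS (p a b : ℕ) : Submodule ℂ (QPoly p) := qHab p a b ⊓ LinearMap.ker (opE p)

/-- `H^{S†}_{a,b} = H_{a,b} ∩ Ker E†`: adjoint symplectic harmonics of bidegree `(a,b)`. -/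
def qHSd (p a b : ℕ) : Submodule ℂ (QPoly p) := qHab p a b ⊓ LinearMap.ker (opEd p)

theorem MvPolynomial.pderiv_pderiv_comm {R σ : Type*} [CommSemiring R] (i j : σ)
    (f : MvPolynomial σ R) : pderiv i (pderiv j f) = pderiv j (pderiv i f) := by
  induction f using MvPolynomial.induction_on' with
  | add f g hf hg => simp only [map_add, hf, hg]
  | monomial d c =>
    rcases eq_or_ne i j with rfl | hij
    · rfl
    simp only [pderiv_monomial]
    rw [Finsupp.tsub_apply, Finsupp.tsub_apply, Finsupp.single_eq_of_ne hij,
      Finsupp.single_eq_of_ne hij.symm, tsub_zero, tsub_zero, tsub_right_comm]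
    ring_nf

section LinearAlgebra

variable {K V : Type*} [Field K] [AddCommGroup V] [Module K V] {A B : Module.End K V}
  {U : Submodule K V} {c : K} {i : ℕ}

theorem map_map_pow_succ_eq_of_apply_pow_succ (hc : c ≠ 0)
    (hAB : ∀ h ∈ U, A ((B ^ (i + 1)) h) = c • (B ^ i) h) :
    (U.map (B ^ (i + 1))).map A = U.map (B ^ i) := by
  apply le_antisymm
  · rintro _ ⟨_, ⟨h, hh, rfl⟩, rfl⟩
    exact ⟨c • h, U.smul_mem c hh, by rw [map_smul, hAB h hh]⟩
  · rintro _ ⟨h, hh, rfl⟩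
    refine ⟨(B ^ (i + 1)) (c⁻¹ • h), ⟨c⁻¹ • h, U.smul_mem _ hh, rfl⟩, ?_⟩
    rw [map_smul, map_smul, hAB h hh, smul_smul, inv_mul_cancel₀ hc, one_smul]

theorem inv_smul_apply_apply_of_apply_pow_succ (hc : c ≠ 0)
    (hAB : ∀ h ∈ U, A ((B ^ (i + 1)) h) = c • (B ^ i) h) :
    ∀ f ∈ U.map (B ^ (i + 1)), c⁻¹ • B (A f) = f := by
  rintro _ ⟨h, hh, rfl⟩
  rw [hAB h hh, map_smul, ← Module.End.mul_apply, ← pow_succ', smul_smul, inv_mul_cancel₀ hc,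
    one_smul]

theorem apply_inv_smul_apply_of_apply_pow_succ (hc : c ≠ 0)
    (hAB : ∀ h ∈ U, A ((B ^ (i + 1)) h) = c • (B ^ i) h) :
    ∀ g ∈ U.map (B ^ i), A (c⁻¹ • B g) = g := by
  rintro _ ⟨h, hh, rfl⟩
  rw [← Module.End.mul_apply, ← pow_succ', map_smul, hAB h hh, smul_smul, inv_mul_cancel₀ hc,
    one_smul]

end LinearAlgebra

variable {p : ℕ}

def opETerm (k : Fin p) : Module.End ℂ (QPoly p) :=
  qmz p (k, 0) * qdzb p (k, 1) - qmz p (k, 1) * qdzb p (k, 0)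

def opEdTerm (k : Fin p) : Module.End ℂ (QPoly p) :=
  qmzb p (k, 0) * qdz p (k, 1) - qmzb p (k, 1) * qdz p (k, 0)

theorem opE_eq_sum : opE p = ∑ k, opETerm k := rfl

theorem opEd_eq_neg_sum : opEd p = -∑ k, opEdTerm k := rfl

theorem opETerm_apply (k : Fin p) (f : QPoly p) :
    opETerm k f = X (Sum.inl (k, 0)) * pderiv (Sum.inr (k, 1)) f
      - X (Sum.inl (k, 1)) * pderiv (Sum.inr (k, 0)) f := rfl

theorem opEdTerm_apply (k : Fin p) (f : QPoly p) :
    opEdTerm k f = X (Sum.inr (k, 0)) * pderiv (Sum.inl (k, 1)) f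
      - X (Sum.inr (k, 1)) * pderiv (Sum.inl (k, 0)) f := rfl

theorem opETerm_opEdTerm_comm {k l : Fin p} (hkl : k ≠ l) (f : QPoly p) :
    opETerm k (opEdTerm l f) = opEdTerm l (opETerm k f) := by
  simp only [opETerm_apply, opEdTerm_apply]
  simp only [map_sub, Derivation.leibniz, pderiv_pderiv_comm (Sum.inr _), smul_eq_mul, pderiv_X,
    ne_eq, Sum.inr.injEq, Sum.inl.injEq, Prod.mk.injEq, hkl, hkl.symm, zero_ne_one, one_ne_zero,
    and_self, and_true, not_false_eq_true, Pi.single_eq_of_ne, mul_zero, add_zero]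
  ring

theorem opEdTerm_opETerm_sub_opETerm_opEdTerm (k : Fin p) (f : QPoly p) :
    opEdTerm k (opETerm k f) - opETerm k (opEdTerm k f) =
      (X (Sum.inl (k, 0)) * pderiv (Sum.inl (k, 0)) f
        + X (Sum.inl (k, 1)) * pderiv (Sum.inl (k, 1)) f)
      - (X (Sum.inr (k, 0)) * pderiv (Sum.inr (k, 0)) f
        + X (Sum.inr (k, 1)) * pderiv (Sum.inr (k, 1)) f) := by
  simp only [opETerm_apply, opEdTerm_apply]
  simp only [map_sub, Derivation.leibniz, pderiv_pderiv_comm (Sum.inr _), smul_eq_mul, pderiv_X,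
    ne_eq, Sum.inr.injEq, Sum.inl.injEq, Prod.mk.injEq, zero_ne_one, one_ne_zero, and_false,
    not_false_eq_true, Pi.single_eq_of_ne, Pi.single_eq_same, mul_zero, mul_one, add_zero]
  ring

theorem opE_opEd_sub_opEd_opE (f : QPoly p) :
    opE p (opEd p f) - opEd p (opE p f) =
      ∑ i, qwz p i • (X i * pderiv i f) - ∑ i, qwzb p i • (X i * pderiv i f) := by
  have hsum : opE p (opEd p f) - opEd p (opE p f) =
      ∑ k, (opEdTerm k (opETerm k f) - opETerm k (opEdTerm k f)) := by
    simp only [opE_eq_sum, opEd_eq_neg_sum, LinearMap.neg_apply, LinearMap.sum_apply,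
      map_neg, map_sum, Finset.sum_neg_distrib, sub_neg_eq_add, neg_add_eq_sub]
    rw [Finset.sum_comm (f := fun l k => opETerm k (opEdTerm l f)), ← Finset.sum_sub_distrib]
    refine Finset.sum_congr rfl fun k _ => ?_
    rw [← Finset.sum_sub_distrib, Finset.sum_eq_single k]
    · intro l _ hlk
      rw [opETerm_opEdTerm_comm hlk.symm, sub_self]
    · simp
  rw [hsum, Finset.sum_congr rfl fun k _ => opEdTerm_opETerm_sub_opETerm_opEdTerm k f,
    Finset.sum_sub_distrib]
  simp [qwz, qwzb, Fintype.sum_sum_type, Fintype.sum_prod_type, Fin.sum_univ_two]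

theorem opE_opEd_of_mem_qPab {α β : ℕ} {f : QPoly p} (hf : f ∈ qPab p α β) :
    opE p (opEd p f) = opEd p (opE p f) + ((α : ℂ) - β) • f := by
  obtain ⟨hα, hβ⟩ := Submodule.mem_inf.mp hf
  have hcomm := opE_opEd_sub_opEd_opE f
  rw [IsWeightedHomogeneous.sum_weight_X_mul_pderiv hα,
    IsWeightedHomogeneous.sum_weight_X_mul_pderiv hβ, ← Nat.cast_smul_eq_nsmul ℂ,
    ← Nat.cast_smul_eq_nsmul ℂ, ← sub_smul, sub_eq_iff_eq_add'] at hcomm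
  exact hcomm

theorem opEd_mem_qPab {α β : ℕ} {f : QPoly p} (hf : f ∈ qPab p (α + 1) β) :
    opEd p f ∈ qPab p α (β + 1) := by
  obtain ⟨hα, hβ⟩ := Submodule.mem_inf.mp hf
  have hterm : ∀ u v, X (Sum.inr u) * pderiv (Sum.inl v) f ∈ qPab p α (β + 1) := by
    intro u v
    have hz := (isWeightedHomogeneous_X ℂ (qwz p) (Sum.inr u)).mul
      (hα.pderiv (i := Sum.inl v) rfl)
    have hzb := (isWeightedHomogeneous_X ℂ (qwzb p) (Sum.inr u)).mul
      (hβ.pderiv (i := Sum.inl v) rfl)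
    simp only [qwz, qwzb, Sum.elim_inr, zero_add] at hz hzb
    exact ⟨hz, by rwa [add_comm] at hzb⟩
  rw [opEd_eq_neg_sum, LinearMap.neg_apply, LinearMap.sum_apply]
  exact neg_mem <| Submodule.sum_mem _ fun k _ => sub_mem (hterm _ _) (hterm _ _)

theorem opEd_pow_mem_qPab {α β i : ℕ} (hi : i ≤ α) {f : QPoly p} (hf : f ∈ qPab p α β) :
    (opEd p ^ i) f ∈ qPab p (α - i) (β + i) := by
  induction i with
  | zero => simpa using hf
  | succ i ih =>
    rw [pow_succ', Module.End.mul_apply]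
    have := opEd_mem_qPab (α := α - (i + 1)) (β := β + i) (f := (opEd p ^ i) f)
      (by convert ih (by omega) using 2; omega)
    rwa [add_assoc] at this

theorem opE_opEd_pow_succ_of_mem_ker {α β : ℕ} {h : QPoly p} (hh : h ∈ qPab p α β)
    (hE : opE p h = 0) {i : ℕ} (hi : i < α) :
    opE p ((opEd p ^ (i + 1)) h) = ((i + 1 : ℂ) * (α - β - i)) • (opEd p ^ i) h := by
  induction i with
  | zero => simp [opE_opEd_of_mem_qPab hh, hE]
  | succ i ih =>
    rw [pow_succ', Module.End.mul_apply,
      opE_opEd_of_mem_qPab (opEd_pow_mem_qPab (by omega : i + 1 ≤ α) hh), ih (by omega),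
      map_smul, ← Module.End.mul_apply, ← pow_succ', ← add_smul]
    push_cast [Nat.cast_sub hi.le]
    ring_nf

/-- For `a ≥ b` and `1 ≤ j ≤ b`, the map
`E : E†^j H^S_{a+j,b−j} → E†^{j−1} H^S_{a+j,b−j}` is a linear isomorphism, with inverse
`(1/(j(a−b+j+1))) E†`. -/
theorem stmt_14 (p a b j : ℕ) (hab : b ≤ a) (hj : 1 ≤ j) (hjb : j ≤ b) :
    let W : Submodule ℂ (QPoly p) :=
      Submodule.map ((opEd p) ^ j) (qHS p (a + j) (b - j))
    let W' : Submodule ℂ (QPoly p) :=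
      Submodule.map ((opEd p) ^ (j - 1)) (qHS p (a + j) (b - j))
    let c : ℂ := (j : ℂ) * ((a : ℂ) - (b : ℂ) + (j : ℂ) + 1)
    Submodule.map (opE p) W = W' ∧
    (∀ f ∈ W, opE p f = 0 → f = 0) ∧
    (∀ f ∈ W, c⁻¹ • opEd p (opE p f) = f) ∧
    (∀ g ∈ W', opE p (c⁻¹ • opEd p g) = g) := by
  obtain ⟨i, rfl⟩ : ∃ i, j = i + 1 := ⟨j - 1, by omega⟩
  intro W W' c
  have hc : c ≠ 0 := by
    have : c = ((i + 1) * (a - b + i + 2) : ℕ) := by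
      push_cast [c, Nat.cast_sub hab]
      ring
    rw [this, Nat.cast_ne_zero]
    positivity
  have hE : ∀ h ∈ qHS p (a + (i + 1)) (b - (i + 1)),
      opE p ((opEd p ^ (i + 1)) h) = c • (opEd p ^ i) h := by
    rintro h ⟨⟨hh, -⟩, hker⟩
    rw [opE_opEd_pow_succ_of_mem_ker hh hker (by omega)]
    push_cast [c, Nat.cast_sub hjb]
    ring_nf
  have hinv := inv_smul_apply_apply_of_apply_pow_succ hc hE
  exact ⟨map_map_pow_succ_eq_of_apply_pow_succ hc hE,
    fun f hf hf0 => by simpa [hf0] using (hinv f hf).symm, hinv,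
    apply_inv_smul_apply_of_apply_pow_succ hc hE⟩
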